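/- Let G be a simple graph that is κ⁺-existentially closed for an infinite cardinal κ, meaning: for all disjoint sets A, B of vertices with |A|, |B| ≤ κ there is a vertex v adjacent to every vertex of A and to no vertex of B. Let X be an independent set of vertices of G with |X| = κ, and let G' be the induced subgraph on { v ∈ G : |N_G(v) ∩ X| < κ }, where N_G(v) is the set of neighbors of v in G. Then X ⊆ G', and G' is κ-existentially closed, i.e., for all disjoint A, B ⊆ G' with |A|, |B| < κ there is v ∈ G' adjacent (in G') to every vertex of A and to no vertex of B. -/
import Mathlib


open Cardinal

universe u

/-- Let `G` be `κ⁺`-existentially closed for an infinite cardinal `κ`, let `X`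
be an independent set with `|X| = κ`, and let `G'` be the induced subgraph on
`{v : |N_G(v) ∩ X| < κ}`. Then `X ⊆ G'` and `G'` is `κ`-existentially
closed. -/
theorem stmt_11 {V : Type u} (G : SimpleGraph V) (κ : Cardinal.{u})
    (hinf : Cardinal.aleph0 ≤ κ)
    (hec : ∀ A B : Set V, Disjoint A B → #A ≤ κ → #B ≤ κ →
      ∃ v : V, (∀ a ∈ A, G.Adj v a) ∧ ∀ b ∈ B, ¬ G.Adj v b)
    (X : Set V) (hX : #X = κ)
    (hind : X.Pairwise fun x y => ¬ G.Adj x y) :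
    X ⊆ {v : V | #(G.neighborSet v ∩ X : Set V) < κ} ∧
    ∀ A B : Set V,
      A ⊆ {v : V | #(G.neighborSet v ∩ X : Set V) < κ} →
      B ⊆ {v : V | #(G.neighborSet v ∩ X : Set V) < κ} →
      Disjoint A B → #A < κ → #B < κ →
      ∃ v ∈ {v : V | #(G.neighborSet v ∩ X : Set V) < κ},
        (∀ a ∈ A, G.Adj v a) ∧ ∀ b ∈ B, ¬ G.Adj v b := by
  constructor
  · intro x hx
    have hempty : (G.neighborSet x ∩ X : Set V) = ∅ := by
      ext y
      simp only [Set.mem_inter_iff, SimpleGraph.mem_neighborSet, Set.mem_empty_iff_false,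
        iff_false, not_and]
      intro hadj hy
      rcases eq_or_ne x y with rfl | hne
      · exact G.irrefl hadj
      · exact hind hx hy hne hadj
    simp only [Set.mem_setOf_eq, hempty, Cardinal.mk_emptyCollection]
    exact lt_of_lt_of_le (Cardinal.nat_lt_aleph0 0) hinf
  · intro A B hA hB hAB hAκ hBκ
    have hdisj : Disjoint A (B ∪ (X \ A)) := by
      refine Set.disjoint_union_right.2 ⟨hAB, ?_⟩
      exact Set.disjoint_sdiff_right
    have hcardB' : #(B ∪ (X \ A) : Set V) ≤ κ := by
      refine le_trans (Cardinal.mk_union_le _ _) ?_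
      have h1 : #B ≤ κ := hBκ.le
      have h2 : #(X \ A : Set V) ≤ κ := by
        calc #(X \ A : Set V) ≤ #X := Cardinal.mk_le_mk_of_subset Set.diff_subset
        _ = κ := hX
      calc #B + #(X \ A : Set V) ≤ κ + κ := add_le_add h1 h2
      _ = κ := Cardinal.add_eq_self hinf
    obtain ⟨v, hv1, hv2⟩ := hec A (B ∪ (X \ A)) hdisj hAκ.le hcardB'
    refine ⟨v, ?_, hv1, fun b hb => hv2 b (Or.inl hb)⟩
    have hsub : (G.neighborSet v ∩ X : Set V) ⊆ A := by
      intro y hy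
      by_contra hyA
      exact hv2 y (Or.inr ⟨hy.2, hyA⟩) hy.1
    exact lt_of_le_of_lt (Cardinal.mk_le_mk_of_subset hsub) hAκ
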